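/- arXiv:2204.01858 — 2 statements merged into one kernel-verified Lean document; each statement's English description precedes it below -/
import Mathlib

section
/- For every integer n ≥ 3, the number of distinct prime factors of n satisfies ω(n) ≤ 1.4 · log n / log(log n). -/
/-!
If `n` has `k` distinct prime factors, then `n` is at least the product of the first `k` primes,
hence at least `wheelProd k`, the product of the first `k` terms of `2, 3` followed by the integers
prime to `6`. As `L ↦ 1.4 L - k log L` increases for `L ≥ k / 1.4`, it is enough to prove
`k log log P ≤ 1.4 log P` for `P = wheelProd k`. For `k ≥ 26` we have `P ≥ k ^ k`, and the claim
reduces to `log log k ≤ 0.4 log k`, which follows from `log y ≤ y / e`. For `4 ≤ k < 26` the bound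
is tight (at `k = 9`, where `P` is the primorial, the ratio is about `1.384`) and is checked by a
kernel computation with binary logarithms; for `k ≤ 3` it follows from `log L ≤ 0.4 L`.
-/

open Real Finset
open Nat (nth count)

theorem Nat.Prime.mod_six_eq_one_or_five {p : ℕ} (hp : p.Prime) (h5 : 5 ≤ p) :
    p % 6 = 1 ∨ p % 6 = 5 := by
  have h2 : ¬ 2 ∣ p := fun h => by have := hp.eq_one_or_self_of_dvd 2 h; omega
  have h3 : ¬ 3 ∣ p := fun h => by have := hp.eq_one_or_self_of_dvd 3 h; omega
  omega

/-- `2, 3, 5, 7, 11, 13, 17, 19, 23, 25, …`: after `2` and `3`, the integers coprime to `6`. -/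
def wheel : ℕ → ℕ
  | 0 => 2
  | 1 => 3
  | i + 2 => 3 * (i + 2) - 1 - i % 2

theorem wheel_le_nth_prime : ∀ i, wheel i ≤ nth Nat.Prime i
  | 0 => by simp [wheel, Nat.nth_prime_zero_eq_two]
  | 1 => by simp [wheel, Nat.nth_prime_one_eq_three]
  | i + 2 => by
    have ih := wheel_le_nth_prime (i + 1)
    have hmono : StrictMono (nth Nat.Prime) := Nat.nth_strictMono Nat.infinite_setOfPred_prime
    have hlt := hmono (show i + 1 < i + 2 by omega)
    have h3 : 3 ≤ nth Nat.Prime (i + 1) := Nat.nth_prime_one_eq_three ▸ hmono.monotone (by omega)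
    have hp := Nat.prime_nth_prime (i + 2)
    have h4 : nth Nat.Prime (i + 2) ≠ 4 := fun h => by rw [h] at hp; norm_num at hp
    have hmod := hp.mod_six_eq_one_or_five (by omega)
    rcases i with _ | j <;> simp only [wheel] at ih ⊢ <;> omega

theorem prod_nth_prime_le_prod {S : Finset ℕ} (hS : ∀ p ∈ S, p.Prime) :
    ∏ i ∈ range #S, nth Nat.Prime i ≤ ∏ p ∈ S, p := by
  induction S using Finset.induction_on_max with
  | empty => simp
  | insert a s hlt ih =>
    have ha : a ∉ s := fun h => lt_irrefl a (hlt a h)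
    have hsub : insert a s ⊆ {p ∈ range (a + 1) | p.Prime} := fun p hp => by
      rcases mem_insert.1 hp with rfl | hp
      · simp [hS p (mem_insert_self p s)]
      · simp [(hlt p hp).le, hS p (mem_insert_of_mem hp)]
    have hcount : #s < count Nat.Prime (a + 1) := by
      rw [Nat.count_eq_card_filter_range]
      exact (card_lt_card (ssubset_insert ha)).trans_le (card_le_card hsub)
    rw [card_insert_of_notMem ha, prod_range_succ, prod_insert ha, mul_comm]
    exact Nat.mul_le_mul (Nat.le_of_lt_succ (Nat.nth_lt_of_lt_count hcount))
      (ih fun p hp => hS p (mem_insert_of_mem hp))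

def wheelProd (k : ℕ) : ℕ := ∏ i ∈ range k, wheel i

theorem wheelProd_card_primeFactors_le {n : ℕ} (hn : n ≠ 0) : wheelProd #n.primeFactors ≤ n :=
  calc wheelProd #n.primeFactors
      ≤ ∏ i ∈ range #n.primeFactors, nth Nat.Prime i :=
        prod_le_prod' fun i _ => wheel_le_nth_prime i
    _ ≤ ∏ p ∈ n.primeFactors, p := prod_nth_prime_le_prod fun _ => Nat.prime_of_mem_primeFactors
    _ ≤ n := Nat.le_of_dvd (Nat.pos_of_ne_zero hn) (Nat.prod_primeFactors_dvd n)

theorem add_one_pow_le_exp_one_mul_pow (k : ℕ) : ((k : ℝ) + 1) ^ k ≤ exp 1 * (k : ℝ) ^ k := by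
  rcases k.eq_zero_or_pos with rfl | hk
  · simp
  have hk' : (0 : ℝ) < k := by exact_mod_cast hk
  calc ((k : ℝ) + 1) ^ k = (1 + (k : ℝ)⁻¹) ^ k * (k : ℝ) ^ k := by
        rw [← mul_pow]; field_simp
    _ ≤ exp 1 * (k : ℝ) ^ k := by gcongr; exact one_add_inv_pow_le_exp

theorem pow_self_le_wheelProd {k : ℕ} (hk : 26 ≤ k) : k ^ k ≤ wheelProd k := by
  induction k, hk using Nat.le_induction with
  | base => decide +kernel
  | succ k hk ih =>
    have hwheel : 3 * k ≤ wheel k + 2 := by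
      obtain ⟨i, rfl⟩ : ∃ i, k = i + 2 := ⟨k - 2, by omega⟩
      simp only [wheel]; omega
    have hwheel' : (3 * k : ℝ) ≤ wheel k + 2 := by exact_mod_cast hwheel
    have ih' : (k : ℝ) ^ k ≤ wheelProd k := by exact_mod_cast ih
    have hk' : (26 : ℝ) ≤ k := by exact_mod_cast hk
    have he := exp_one_lt_d9
    suffices ((k : ℝ) + 1) ^ (k + 1) ≤ wheelProd k * wheel k by
      rw [wheelProd, prod_range_succ]; exact_mod_cast this
    calc ((k : ℝ) + 1) ^ (k + 1) = ((k : ℝ) + 1) ^ k * (k + 1) := pow_succ _ _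
      _ ≤ exp 1 * (k : ℝ) ^ k * (k + 1) := by gcongr; exact add_one_pow_le_exp_one_mul_pow k
      _ = (k : ℝ) ^ k * (exp 1 * (k + 1)) := by ring
      _ ≤ wheelProd k * wheel k := by gcongr; nlinarith

theorem one_lt_log_three : 1 < log 3 := by
  rw [lt_log_iff_exp_lt (by norm_num)]
  exact exp_one_lt_d9.trans (by norm_num)

theorem log_le_two_fifths_mul {y : ℝ} (hy : 0 < y) : log y ≤ 2 / 5 * y := by
  have h := log_le_sub_one_of_pos (div_pos hy (exp_pos 1))
  rw [log_div hy.ne' (exp_pos 1).ne', log_exp] at h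
  have : y / exp 1 ≤ 2 / 5 * y := by
    rw [div_le_iff₀ (exp_pos 1)]
    nlinarith [exp_one_gt_d9]
  linarith

-- `T ↦ a T - k log T` is increasing for `T ≥ k / a`.
theorem mul_log_le_mul_of_le {a k t T : ℝ} (hk : 0 ≤ k) (ht : 0 < t) (hkt : k ≤ a * t) (htT : t ≤ T)
    (h : k * log t ≤ a * t) : k * log T ≤ a * T := by
  have hT : 0 < T := ht.trans_le htT
  have hlog : log T - log t ≤ (T - t) / t := by
    have := log_le_sub_one_of_pos (div_pos hT ht)
    rw [log_div hT.ne' ht.ne'] at this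
    rwa [sub_div, div_self ht.ne']
  have hkt' : k * ((T - t) / t) ≤ a * (T - t) := by
    rw [mul_div_assoc', div_le_iff₀ ht]
    nlinarith
  nlinarith

theorem mul_log_log_le_of_pow_self_le {k : ℕ} (hk : 3 ≤ k) {x : ℝ} (hx : (k : ℝ) ^ k ≤ x) :
    k * log (log x) ≤ 1.4 * log x := by
  have hk0 : (0 : ℝ) < k := by positivity
  have hlogk : 1 < log k :=
    one_lt_log_three.trans_le (log_le_log (by norm_num) (by exact_mod_cast hk))
  have ht : k * log k ≤ log x := by
    simpa [log_pow] using log_le_log (by positivity) hx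
  refine mul_log_le_mul_of_le hk0.le (by positivity) (by nlinarith) ht ?_
  rw [log_mul hk0.ne' (by positivity)]
  nlinarith [log_le_two_fifths_mul (zero_lt_one.trans hlogk)]

-- `t = m log 2 / 4` is a lower bound for `log x`; as `0.69 < log 2 < 0.7`, `hkm` gives
-- `k ≤ 1.4 t` and `hcert` is `k log (7 m / 40) ≤ 1.4 t` exponentiated.
theorem mul_log_log_le_of_certificate {k m : ℕ} {x : ℝ} (hk : 0 < k) (hx : (2 : ℝ) ^ m ≤ x ^ 4)
    (hkm : 2000 * k ≤ 483 * m) (hcert : (7 * m) ^ (20 * k) ≤ 40 ^ (20 * k) * 2 ^ (7 * m)) :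
    k * log (log x) ≤ 1.4 * log x := by
  have hm : (0 : ℝ) < m := by exact_mod_cast (show 0 < m by omega)
  have hkm' : (2000 * k : ℝ) ≤ 483 * m := by exact_mod_cast hkm
  have hcert' : ((7 * m / 40 : ℝ)) ^ (20 * k) ≤ 2 ^ (7 * m) := by
    rw [div_pow, div_le_iff₀ (by positivity)]; exact_mod_cast hcert.trans_eq (mul_comm _ _)
  have hl2 := log_two_gt_d9
  have hl2' := log_two_lt_d9
  have ht : m * log 2 / 4 ≤ log x := by
    have := log_le_log (by positivity) hx
    rw [log_pow, log_pow] at this; push_cast at this; linarith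
  refine mul_log_le_mul_of_le (by positivity) (by positivity) (by nlinarith) ht ?_
  have h1 : log (m * log 2 / 4) ≤ log (7 * m / 40) :=
    log_le_log (by positivity) (by nlinarith)
  have h2 : 20 * k * log (7 * m / 40) ≤ 7 * m * log 2 := by
    have := log_le_log (by positivity) hcert'
    rw [log_pow, log_pow] at this; push_cast at this; linarith
  have hk' : (0 : ℝ) ≤ k := by positivity
  nlinarith

theorem wheelProd_certificate : ∀ k < 26, 4 ≤ k →
    2000 * k ≤ 483 * Nat.log2 (wheelProd k ^ 4) ∧
    (7 * Nat.log2 (wheelProd k ^ 4)) ^ (20 * k) ≤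
      40 ^ (20 * k) * 2 ^ (7 * Nat.log2 (wheelProd k ^ 4)) := by
  decide +kernel

theorem mul_log_log_le_of_wheelProd_le {k : ℕ} (hk : 4 ≤ k) {x : ℝ} (hx : wheelProd k ≤ x) :
    k * log (log x) ≤ 1.4 * log x := by
  rcases lt_or_ge k 26 with hsmall | hlarge
  · obtain ⟨hkm, hcert⟩ := wheelProd_certificate k hsmall hk
    have hpos : wheelProd k ^ 4 ≠ 0 := pow_ne_zero 4 (prod_ne_zero_iff.2 fun i _ => by
      rcases i with _ | _ | i <;> simp only [wheel] <;> omega)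
    refine mul_log_log_le_of_certificate (by omega) ?_ hkm hcert
    calc (2 : ℝ) ^ Nat.log2 (wheelProd k ^ 4) ≤ ((wheelProd k ^ 4 : ℕ) : ℝ) := by
          exact_mod_cast Nat.log2_self_le hpos
      _ ≤ x ^ 4 := by push_cast; gcongr
  · exact mul_log_log_le_of_pow_self_le (by omega)
      (le_trans (by exact_mod_cast pow_self_le_wheelProd hlarge) hx)

theorem omega_upper_bound (n : ℕ) (hn : n ≥ 3) :
    (n.primeFactors.card : ℝ) ≤ 1.4 * Real.log n / Real.log (Real.log n) := by
  have hlog : 1 < log n :=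
    one_lt_log_three.trans_le (log_le_log (by norm_num) (by exact_mod_cast hn))
  rw [le_div_iff₀ (log_pos hlog)]
  rcases le_or_gt n.primeFactors.card 3 with hk | hk
  · have hk' : (n.primeFactors.card : ℝ) ≤ 3 := by exact_mod_cast hk
    nlinarith [log_le_two_fifths_mul (zero_lt_one.trans hlog), log_pos hlog]
  · exact mul_log_log_le_of_wheelProd_le hk
      (by exact_mod_cast wheelProd_card_primeFactors_le (by omega))
end

section
/- Let K be a number field, γ ∈ K^× not a root of unity, and u_k = γ^k − 1. Let 𝔭 be a prime ideal of the ring of integers of K that is a primitive divisor of u_n, i.e. ν_𝔭(u_n) ≥ 1 and ν_𝔭(u_k) = 0 for all 1 ≤ k < n. Then the absolute norm of 𝔭 satisfies N𝔭 ≡ 1 (mod n); in particular N𝔭 ≥ n + 1. -/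
open IsDedekindDomain NumberField

/-!
If `γ = c / d` with `d ∉ 𝔭`, then `𝔭 ∣ γ ^ k - 1` exactly when `(c / d) ^ k = 1` in the finite
field `𝓞 K ⧸ 𝔭`. Primitivity therefore says that the residue of `γ` has multiplicative order
exactly `n`, so `n` divides the order `N𝔭 - 1` of the unit group of `𝓞 K ⧸ 𝔭`.
-/

theorem orderOf_dvd_natCard_sub_one {G₀ : Type*} [GroupWithZero G₀] {g : G₀} (hg : g ≠ 0) :
    orderOf g ∣ Nat.card G₀ - 1 := by
  rw [← Nat.card_units, ← Units.val_mk0 hg, orderOf_units]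
  exact orderOf_dvd_natCard _

theorem Nat.mod_eq_one_mod_and_succ_le_of_dvd_sub_one {n N : ℕ} (h : n ∣ N - 1) (hN : 2 ≤ N) :
    N % n = 1 % n ∧ n + 1 ≤ N := by
  refine ⟨((Nat.modEq_iff_dvd' (by omega)).2 h).symm, ?_⟩
  have := Nat.le_of_dvd (by omega) h
  omega

namespace IsDedekindDomain.HeightOneSpectrum

variable {R : Type*} [CommRing R] [IsDedekindDomain R] {K : Type*} [Field K] [Algebra R K]
  [IsFractionRing R K] (v : HeightOneSpectrum R)

theorem valuation_eq_one_of_valuation_pow_sub_one_lt_one {x : K} {n : ℕ} (hn : n ≠ 0)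
    (h : v.valuation K (x ^ n - 1) < 1) : v.valuation K x = 1 := by
  have hxn : v.valuation K (x ^ n) = 1 := by
    simpa using (v.valuation K).map_eq_of_sub_lt (x := 1) (y := x ^ n) (by simpa using h)
  rw [map_pow] at hxn
  exact (pow_eq_one_iff_left hn).1 hxn

theorem valuation_sub_one_lt_one_iff {x : K} {c d : R} (hd : d ∉ v.asIdeal)
    (hx : x * algebraMap R K d = algebraMap R K c) :
    v.valuation K (x - 1) < 1 ↔ Ideal.Quotient.mk v.asIdeal c = Ideal.Quotient.mk v.asIdeal d := by
  have hcd : algebraMap R K (c - d) = (x - 1) * algebraMap R K d := by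
    rw [map_sub, ← hx]; ring
  rw [Ideal.Quotient.eq, ← v.valuation_lt_one_iff_mem (K := K), Algebra.cast, hcd, map_mul,
    v.valuation_eq_one_iff_notMem.2 hd, mul_one]

theorem exists_residue_pow_eq_one_iff {x : K} (hx : v.valuation K x = 1) :
    ∃ g : R ⧸ v.asIdeal, ∀ k : ℕ, g ^ k = 1 ↔ v.valuation K (x ^ k - 1) < 1 := by
  let := Ideal.Quotient.field v.asIdeal
  obtain ⟨c, ⟨d, hd⟩, hcd⟩ := v.exists_primeCompl_mul_eq_of_integer x hx.le
  have hd0 : Ideal.Quotient.mk v.asIdeal d ≠ 0 := by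
    rwa [Ne, Ideal.Quotient.eq_zero_iff_mem]
  refine ⟨Ideal.Quotient.mk v.asIdeal c / Ideal.Quotient.mk v.asIdeal d, fun k ↦ ?_⟩
  have hdk : d ^ k ∉ v.asIdeal := fun h ↦ hd (v.isPrime.mem_of_pow_mem k h)
  rw [v.valuation_sub_one_lt_one_iff (c := c ^ k) hdk (by rw [map_pow, map_pow, ← hcd, mul_pow]),
    div_pow, div_eq_one_iff_eq (pow_ne_zero k hd0), map_pow, map_pow]

end IsDedekindDomain.HeightOneSpectrum

theorem absNorm_primitive_divisor_general (K : Type*) [Field K] [NumberField K]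
    (γ : K) (n : ℕ) (hn : 0 < n) (v : HeightOneSpectrum (𝓞 K))
    (hprim : v.valuation K (γ ^ n - 1) < 1)
    (hprim' : ∀ k : ℕ, 1 ≤ k → k < n → v.valuation K (γ ^ k - 1) = 1) :
    Ideal.absNorm v.asIdeal % n = 1 % n ∧ n + 1 ≤ Ideal.absNorm v.asIdeal := by
  let := Ideal.Quotient.field v.asIdeal
  obtain ⟨g, hg⟩ := v.exists_residue_pow_eq_one_iff
    (v.valuation_eq_one_of_valuation_pow_sub_one_lt_one hn.ne' hprim)
  have hgn : g ^ n = 1 := (hg n).2 hprim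
  have horder : orderOf g = n :=
    (orderOf_eq_iff hn).2 ⟨hgn, fun k hk hk0 ↦ by simp [hg, hprim' k hk0 hk]⟩
  have hdvd : n ∣ Nat.card (𝓞 K ⧸ v.asIdeal) - 1 :=
    horder ▸ orderOf_dvd_natCard_sub_one (ne_zero_pow hn.ne' (hgn ▸ one_ne_zero))
  rw [Ideal.absNorm_apply, Submodule.cardQuot_apply]
  exact Nat.mod_eq_one_mod_and_succ_le_of_dvd_sub_one hdvd Finite.one_lt_card

theorem absNorm_primitive_divisor (K : Type*) [Field K] [NumberField K]
    (γ : K) (hγ0 : γ ≠ 0) (hγ : ∀ k : ℕ, 0 < k → γ ^ k ≠ 1)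
    (n : ℕ) (hn : 0 < n) (v : HeightOneSpectrum (𝓞 K))
    (hval : v.valuation K γ = 1)
    (hprim : v.valuation K (γ ^ n - 1) < 1)
    (hprim' : ∀ k : ℕ, 1 ≤ k → k < n → v.valuation K (γ ^ k - 1) = 1) :
    Ideal.absNorm v.asIdeal % n = 1 % n ∧ n + 1 ≤ Ideal.absNorm v.asIdeal :=
  absNorm_primitive_divisor_general K γ n hn v hprim hprim'
end
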